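/- For any fit diploid individual x with diploid burden b(x) ≥ 1 and any recombination rate r ∈ (0,1], the probability g_r(x) of producing a mutation-free gamete satisfies g_r(x) ≥ ((1-r)^{N-1}/2)·1{min(b(z_i),b(z_j))=0} and g_1(x) = (1/2)^{b(x)} > 0 whenever the mutations on the two haplotypes occupy disjoint sets of loci. -/

import Mathlib

open Finset

/-- Haploid burden of a haplotype over `N` loci. -/
def hb (N : ℕ) (z : ℕ → Bool) : ℕ := ∑ n ∈ Finset.range N, (z n).toNat

/-- Probability that the individual `(zi, zj)` produces a mutation-free gamete under
recombination rate `r`: sum over the set `γ` of potential crossover breakpoints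
(each of the `N-1` gaps independently with probability `r`) and over the set `τ`
of segments taken from the first haplotype (each segment chosen uniformly); the
gamete takes locus `n` from `zi` iff the segment index of `n` lies in `τ`. -/
noncomputable def gr (N : ℕ) (r : ℝ) (zi zj : ℕ → Bool) : ℝ :=
  ∑ γ ∈ (Finset.range (N - 1)).powerset, ∑ τ ∈ (Finset.range N).powerset,
    r ^ γ.card * (1 - r) ^ (N - 1 - γ.card) * (1 / 2 : ℝ) ^ N *
      (if ∀ n ∈ Finset.range N,
          (if (γ ∩ Finset.range n).card ∈ τ then zi n else zj n) = false
        then 1 else 0)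

/-! With no crossover (weight `(1 - r) ^ (N - 1)`) the gamete is a whole parental haplotype, so it
is clean with probability at least `1/2` as soon as one haplotype is mutation-free. At `r = 1` every
gap is a breakpoint and each locus is its own segment: the gamete is clean iff it takes every
mutated locus from the other haplotype, which fitness allows, and the `N - b(x)` unmutated loci
are free, giving `2 ^ (N - b(x))` of the `2 ^ N` equally likely choices. -/

lemma hb_eq_card_filter (N : ℕ) (z : ℕ → Bool) : hb N z = #{n ∈ range N | z n = true} := by
  rw [hb, card_filter]
  exact sum_congr rfl fun n _ => by cases z n <;> rfl

lemma hb_add_card_filter_eq_false (N : ℕ) (z : ℕ → Bool) :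
    hb N z + #{n ∈ range N | z n = false} = N := by
  simpa [hb_eq_card_filter] using card_filter_add_card_filter_not (s := range N) (z · = true)

lemma hb_eq_zero_iff {N : ℕ} {z : ℕ → Bool} : hb N z = 0 ↔ ∀ n < N, z n = false := by
  simp [hb_eq_card_filter, filter_eq_empty_iff]

lemma one_half_pow_mul_two_pow_sub {N b : ℕ} (h : b ≤ N) :
    (1 / 2 : ℝ) ^ N * 2 ^ (N - b) = (1 / 2) ^ b := by
  obtain ⟨k, rfl⟩ := Nat.exists_eq_add_of_le h
  rw [Nat.add_sub_cancel_left, pow_add, mul_assoc, ← mul_pow]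
  norm_num

lemma gr_nonneg {N : ℕ} {r : ℝ} {zi zj : ℕ → Bool} (hr0 : 0 ≤ r) (hr1 : r ≤ 1) :
    0 ≤ gr N r zi zj := by
  have h1r : 0 ≤ 1 - r := sub_nonneg.2 hr1
  exact sum_nonneg fun γ _ => sum_nonneg fun τ _ => by positivity

section

variable {N : ℕ} {zi zj : ℕ → Bool}

def cleanChoices (N : ℕ) (zi zj : ℕ → Bool) (γ : Finset ℕ) : Finset (Finset ℕ) :=
  {τ ∈ (range N).powerset | ∀ n ∈ range N,
    (if (γ ∩ range n).card ∈ τ then zi n else zj n) = false}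

lemma gr_eq_sum_card_cleanChoices (N : ℕ) (r : ℝ) (zi zj : ℕ → Bool) :
    gr N r zi zj = ∑ γ ∈ (range (N - 1)).powerset,
      r ^ γ.card * (1 - r) ^ (N - 1 - γ.card) * (1 / 2 : ℝ) ^ N * #(cleanChoices N zi zj γ) := by
  refine sum_congr rfl fun γ _ => ?_
  rw [← mul_sum, cleanChoices, ← sum_boole]

lemma two_pow_le_card_cleanChoices_empty (hN : 1 ≤ N) (h : hb N zi = 0 ∨ hb N zj = 0) :
    2 ^ (N - 1) ≤ #(cleanChoices N zi zj ∅) := by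
  have h0 : 0 ∈ range N := mem_range.2 hN
  rcases h with h | h <;> rw [hb_eq_zero_iff] at h
  -- without crossovers all loci lie in segment `0`, so `0 ∈ τ` decides which haplotype is passed on
  · calc 2 ^ (N - 1) = #(Icc {0} (range N)) := by
          rw [card_Icc_finset (singleton_subset_iff.2 h0), card_range, card_singleton]
      _ ≤ #(cleanChoices N zi zj ∅) := card_le_card fun τ hτ => by
          rw [mem_Icc, singleton_subset_iff] at hτ
          simp_all [cleanChoices]
  · calc 2 ^ (N - 1) = #((range N).erase 0).powerset := by
          rw [card_powerset, card_erase_of_mem h0, card_range]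
      _ ≤ #(cleanChoices N zi zj ∅) := card_le_card fun τ hτ => by
          rw [mem_powerset, subset_erase] at hτ
          simp_all [cleanChoices]

lemma cleanChoices_range_eq_Icc :
    cleanChoices N zi zj (range (N - 1)) =
      Icc {n ∈ range N | zj n = true} {n ∈ range N | zi n = false} := by
  have hseg : ∀ n < N, (range (N - 1) ∩ range n).card = n := fun n hn => by
    rw [inter_eq_right.2 (range_subset_range.2 (by omega)), card_range]
  ext τ
  simp +contextual only [cleanChoices, mem_filter, mem_powerset, mem_Icc, subset_iff, mem_range,
    hseg]
  constructor
  · rintro ⟨hτ, hclean⟩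
    refine ⟨fun n ⟨hn, hz⟩ => ?_, fun n hnτ => ?_⟩
    · by_contra hnτ
      simpa [hnτ, hz] using hclean n hn
    · exact ⟨hτ hnτ, by simpa [hnτ] using hclean n (hτ hnτ)⟩
  · rintro ⟨hR, hT⟩
    refine ⟨fun n hn => (hT hn).1, fun n hn => ?_⟩
    split_ifs with hnτ
    · exact (hT hnτ).2
    · exact Bool.eq_false_iff.2 fun hz => hnτ (hR ⟨hn, hz⟩)

lemma one_sub_pow_div_two_le_gr {r : ℝ} (hN : 1 ≤ N) (hr0 : 0 ≤ r) (hr1 : r ≤ 1)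
    (h : hb N zi = 0 ∨ hb N zj = 0) : (1 - r) ^ (N - 1) / 2 ≤ gr N r zi zj := by
  have h1r : 0 ≤ 1 - r := sub_nonneg.2 hr1
  rw [gr_eq_sum_card_cleanChoices]
  calc (1 - r) ^ (N - 1) / 2 = (1 - r) ^ (N - 1) * ((1 / 2 : ℝ) ^ N * 2 ^ (N - 1)) := by
        rw [one_half_pow_mul_two_pow_sub hN, pow_one, div_eq_mul_one_div]
    _ ≤ (1 - r) ^ (N - 1) * (1 / 2 : ℝ) ^ N * #(cleanChoices N zi zj ∅) := by
        rw [← mul_assoc]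
        gcongr
        exact_mod_cast two_pow_le_card_cleanChoices_empty hN h
    _ ≤ _ := by
        refine le_trans (le_of_eq ?_) (single_le_sum (fun γ _ => ?_) (empty_mem_powerset _))
        · simp
        · positivity

lemma gr_one_eq (hfit : ∀ n < N, ¬(zi n = true ∧ zj n = true)) :
    gr N 1 zi zj = (1 / 2 : ℝ) ^ (hb N zi + hb N zj) := by
  have hRT : {n ∈ range N | zj n = true} ⊆ {n ∈ range N | zi n = false} := fun n hn => by
    simp only [mem_filter, mem_range] at hn ⊢
    exact ⟨hn.1, Bool.eq_false_iff.2 fun hz => hfit n hn.1 ⟨hz, hn.2⟩⟩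
  have hcard := hb_add_card_filter_eq_false N zi
  have hle : hb N zi + hb N zj ≤ N := by
    have := card_le_card hRT
    rw [← hb_eq_card_filter] at this
    omega
  -- any other `γ` misses a gap and is weighted by `0 ^ (N - 1 - #γ) = 0`
  rw [gr_eq_sum_card_cleanChoices, sum_eq_single (range (N - 1))]
  · rw [cleanChoices_range_eq_Icc, card_Icc_finset hRT, ← hb_eq_card_filter,
      show #{n ∈ range N | zi n = false} - hb N zj = N - (hb N zi + hb N zj) by omega]
    simpa using one_half_pow_mul_two_pow_sub hle
  · intro γ hγ hne
    have : γ.card < N - 1 := by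
      simpa using card_lt_card (ssubset_of_subset_of_ne (mem_powerset.1 hγ) hne)
    simp [zero_pow (show N - 1 - γ.card ≠ 0 by omega)]
  · exact fun h => absurd (mem_powerset_self _) h

end

theorem stmt_10_general (N : ℕ) (hN : 1 ≤ N) (zi zj : ℕ → Bool)
    (hfit : ∀ n < N, ¬(zi n = true ∧ zj n = true))
    (r : ℝ) (hr0 : 0 < r) (hr1 : r ≤ 1) :
    gr N r zi zj ≥ (1 - r) ^ (N - 1) / 2 *
        (if min (hb N zi) (hb N zj) = 0 then 1 else 0) ∧
    gr N 1 zi zj = (1 / 2 : ℝ) ^ (hb N zi + hb N zj) ∧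
    0 < gr N 1 zi zj := by
  have hone := gr_one_eq hfit
  refine ⟨?_, hone, hone ▸ by positivity⟩
  split_ifs with hmin
  · simpa using one_sub_pow_div_two_le_gr hN hr0.le hr1 (Nat.min_eq_zero_iff.1 hmin)
  · simpa using gr_nonneg hr0.le hr1

/-- For a fit individual with positive diploid burden:
(a) for any r ∈ (0,1], g_r(x) ≥ ((1-r)^{N-1}/2)·1{min(b(zi),b(zj)) = 0};
(b) since the mutations on the two haplotypes occupy disjoint sets of loci (fitness),
g_1(x) = (1/2)^{b(x)} > 0. -/
theorem stmt_10 (N : ℕ) (hN : 1 ≤ N) (zi zj : ℕ → Bool)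
    (hfit : ∀ n < N, ¬(zi n = true ∧ zj n = true))
    (hb1 : 1 ≤ hb N zi + hb N zj)
    (r : ℝ) (hr0 : 0 < r) (hr1 : r ≤ 1) :
    gr N r zi zj ≥ (1 - r) ^ (N - 1) / 2 *
        (if min (hb N zi) (hb N zj) = 0 then 1 else 0) ∧
    gr N 1 zi zj = (1 / 2 : ℝ) ^ (hb N zi + hb N zj) ∧
    0 < gr N 1 zi zj :=
  stmt_10_general N hN zi zj hfit r hr0 hr1
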